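/- Let S, A be metric spaces with Borel σ-algebras, S×A carrying the metric d_S + d_A, and π an L_π-Lipschitz-continuous policy. Let f : S×A → ℝ be bounded, measurable, and 1-Lipschitz with respect to d_{S×A}. Then the function g : S → ℝ defined by g(s) = ∫_A f(s,a) dπ(a|s) is (1 + L_π)-Lipschitz on S. -/

import Mathlib

/-!
Insert the intermediate value `∫ f(s', a) dπ(a|s)`: changing the state inside `f` costs at
most `d(s, s')` because `f` is 1-Lipschitz in its first argument uniformly in `a`, and changing
the policy costs at most `L_π d(s, s')` because `f(s', ·)` is a bounded 1-Lipschitz test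
function on `A`.
-/

open MeasureTheory

lemma abs_integral_sub_integral_le_of_abs_sub_le {α : Type*} [MeasurableSpace α]
    {μ : Measure α} [IsProbabilityMeasure μ] {g h : α → ℝ}
    (hg : Integrable g μ) (hh : Integrable h μ) {c : ℝ} (hgh : ∀ a, |g a - h a| ≤ c) :
    |∫ a, g a ∂μ - ∫ a, h a ∂μ| ≤ c := by
  rw [← integral_sub hg hh]
  simpa using
    norm_integral_le_of_norm_le_const (μ := μ) (f := fun a ↦ g a - h a) (ae_of_all _ hgh)

theorem stmt_12_general
    {S A : Type*}
    [MetricSpace S] [MeasurableSpace S]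
    [MetricSpace A] [MeasurableSpace A]
    -- L_π-Lipschitz-continuous policy
    (π : S → Measure A)
    (hπprob : ∀ s, IsProbabilityMeasure (π s))
    (Lπ : ℝ)
    (hπLip : ∀ g : A → ℝ, (∃ C, ∀ x, |g x| ≤ C) →
      (∀ x y, |g x - g y| ≤ dist x y) →
      ∀ s s', |(∫ a, g a ∂(π s)) - (∫ a, g a ∂(π s'))| ≤ Lπ * dist s s')
    -- bounded measurable 1-Lipschitz f on S×A
    (f : S × A → ℝ)
    (hfmeas : Measurable f)
    (Cf : ℝ) (hfbd : ∀ p, |f p| ≤ Cf)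
    (hfLip : ∀ p q : S × A, |f p - f q| ≤ dist p.1 q.1 + dist p.2 q.2) :
    ∀ s s', |(∫ a, f (s, a) ∂(π s)) - (∫ a, f (s', a) ∂(π s'))| ≤
      (1 + Lπ) * dist s s' := by
  intro s s'
  have := hπprob s
  have hint (t : S) : Integrable (fun a ↦ f (t, a)) (π s) :=
    .of_bound (hfmeas.comp measurable_prodMk_left).aestronglyMeasurable Cf
      (ae_of_all _ fun a ↦ hfbd (t, a))
  have hstate : |∫ a, f (s, a) ∂(π s) - ∫ a, f (s', a) ∂(π s)| ≤ dist s s' :=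
    abs_integral_sub_integral_le_of_abs_sub_le (hint s) (hint s') fun a ↦ by
      simpa using hfLip (s, a) (s', a)
  have hpolicy : |∫ a, f (s', a) ∂(π s) - ∫ a, f (s', a) ∂(π s')| ≤ Lπ * dist s s' :=
    hπLip _ ⟨Cf, fun a ↦ hfbd _⟩ (fun x y ↦ by simpa using hfLip (s', x) (s', y)) s s'
  calc _ ≤ _ := abs_sub_le _ (∫ a, f (s', a) ∂(π s)) _
    _ ≤ dist s s' + Lπ * dist s s' := add_le_add hstate hpolicy
    _ = (1 + Lπ) * dist s s' := by ring

/-- Integrating a bounded measurable 1-Lipschitz function on S×A (metric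
d_S + d_A) against an `L_π`-Lipschitz-continuous policy yields a
`(1 + L_π)`-Lipschitz function on S. -/
theorem stmt_12
    {S A : Type*}
    [MetricSpace S] [MeasurableSpace S] [BorelSpace S]
    [MetricSpace A] [MeasurableSpace A] [BorelSpace A]
    -- L_π-Lipschitz-continuous policy
    (π : S → Measure A)
    (hπmeas : Measurable π)
    (hπprob : ∀ s, IsProbabilityMeasure (π s))
    (Lπ : ℝ)
    (hπLip : ∀ g : A → ℝ, (∃ C, ∀ x, |g x| ≤ C) →
      (∀ x y, |g x - g y| ≤ dist x y) →
      ∀ s s', |(∫ a, g a ∂(π s)) - (∫ a, g a ∂(π s'))| ≤ Lπ * dist s s')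
    -- bounded measurable 1-Lipschitz f on S×A
    (f : S × A → ℝ)
    (hfmeas : Measurable f)
    (Cf : ℝ) (hfbd : ∀ p, |f p| ≤ Cf)
    (hfLip : ∀ p q : S × A, |f p - f q| ≤ dist p.1 q.1 + dist p.2 q.2) :
    ∀ s s', |(∫ a, f (s, a) ∂(π s)) - (∫ a, f (s', a) ∂(π s'))| ≤
      (1 + Lπ) * dist s s' :=
  stmt_12_general π hπprob Lπ hπLip f hfmeas Cf hfbd hfLip
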